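/- Let 0 < s ≤ 1 and 0 < p < ∞ satisfy sp ≤ σ, where σ is an exponent from the iterated reverse doubling condition. If O ∈ X and E(O) ⊂ X is an (s,p)-thin set at infinity, then X ∖ E(O) is unbounded: for every N ∈ ℕ there exists x ∈ X ∖ E(O) with d(x,O) > N. -/

import Mathlib

open MeasureTheory Metric Set Filter
open scoped ENNReal NNReal Topology

noncomputable section
namespace Paper

variable {X : Type*} [MetricSpace X] [MeasurableSpace X]

/-- The median `m_u(E)` of a function `u` over a set `E`. -/
def median (μ : Measure X) (u : X → ℝ) (E : Set X) : ℝ :=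
  sInf {a : ℝ | μ {x | x ∈ E ∧ a < u x} < μ E / 2}

/-- `g` is an `s`-gradient of `u` (with respect to `μ`). -/
def IsSGradient (μ : Measure X) (s : ℝ) (u : X → ℝ) (g : X → ℝ≥0∞) : Prop :=
  Measurable g ∧ ∃ N : Set X, μ N = 0 ∧ ∀ x ∉ N, ∀ y ∉ N,
    ENNReal.ofReal |u x - u y| ≤ ENNReal.ofReal (dist x y ^ s) * (g x + g y)

/-- The `p`-th power of the `L^p` quasinorm of `u : X → ℝ` restricted to `F`. -/
def lpNormP (μ : Measure X) (p : ℝ) (u : X → ℝ) (F : Set X) : ℝ≥0∞ :=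
  ∫⁻ x in F, ENNReal.ofReal |u x| ^ p ∂μ

/-- Membership in the homogeneous Hajłasz–Sobolev space `Ṁ^{s,p}(X)`:
`u` is measurable (hence finite everywhere, being real valued) and has an
`s`-gradient in `L^p`. -/
def MemHomHajlasz (μ : Measure X) (s p : ℝ) (u : X → ℝ) : Prop :=
  Measurable u ∧ ∃ g : X → ℝ≥0∞, IsSGradient μ s u g ∧ (∫⁻ x, g x ^ p ∂μ) < ⊤

/-- The homogeneous Hajłasz quasi-seminorm `‖u‖_{Ṁ^{s,p}}`. -/
def hajlaszSeminorm (μ : Measure X) (s p : ℝ) (u : X → ℝ) : ℝ≥0∞ :=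
  ⨅ (g : X → ℝ≥0∞) (_ : IsSGradient μ s u g), (∫⁻ x, g x ^ p ∂μ) ^ (1 / p)

/-- The quasi-seminorm `‖u‖_{M^{s,p}} = ‖u‖_{L^p} + ‖u‖_{Ṁ^{s,p}}`. -/
def hajlaszNorm (μ : Measure X) (s p : ℝ) (u : X → ℝ) : ℝ≥0∞ :=
  lpNormP μ p u Set.univ ^ (1 / p) + hajlaszSeminorm μ s p u

/-- The capacity `Cap_{M^{s,p}}(E)`; the infimum over the empty set is `⊤ = ∞`. -/
def hajlaszCapacity (μ : Measure X) (s p : ℝ) (E : Set X) : ℝ≥0∞ :=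
  ⨅ (u : X → ℝ) (_ : MemHomHajlasz μ s p u ∧ lpNormP μ p u Set.univ < ⊤ ∧
      ∃ U : Set X, IsOpen U ∧ E ⊆ U ∧ ∀ x ∈ U, 1 ≤ u x),
    hajlaszNorm μ s p u ^ p

/-- `M^{s,p}`-quasicontinuity of `u`. -/
def HajlaszQC (μ : Measure X) (s p : ℝ) (u : X → ℝ) : Prop :=
  ∀ ε : ℝ, 0 < ε → ∃ E : Set X,
    hajlaszCapacity μ s p E < ENNReal.ofReal ε ∧ ContinuousOn u Eᶜ

/-- The variational relative capacity `cap_{s,p}(E,F)`. -/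
def relCap (μ : Measure X) (s p : ℝ) (E F : Set X) : ℝ≥0∞ :=
  ⨅ (v : X → ℝ) (_ : MemHomHajlasz μ s p v ∧ HajlaszQC μ s p v ∧ ∀ x ∈ E, 1 ≤ v x),
    (lpNormP μ p v F / ENNReal.ofReal (Metric.diam F ^ (s * p)) +
      ⨅ (g : X → ℝ≥0∞) (_ : IsSGradient μ s v g), ∫⁻ x in F, g x ^ p ∂μ)

/-- The annulus `A_r(O) = B(O, κ r) \ B(O, r)`. -/
def ann (κ : ℝ) (O : X) (r : ℝ) : Set X := ball O (κ * r) \ ball O r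

/-- The enlarged annulus `Λ A_r(O) = B(O, Λ κ r) \ B(O, r / Λ)`. -/
def annL (κ Λ : ℝ) (O : X) (r : ℝ) : Set X := ball O (Λ * (κ * r)) \ ball O (r / Λ)

/-- `E` is `(s,p)`-thin at infinity with respect to the basepoint `O`. -/
def ThinAtInfinity (μ : Measure X) (s p κ : ℝ) (O : X) (E : Set X) : Prop :=
  ∀ Λ : ℝ, 1 < Λ →
    Tendsto (fun m : ℕ =>
        ∑' j : ℕ, relCap μ s p (E ∩ ann κ O (κ ^ (m + j))) (annL κ Λ O (κ ^ (m + j))))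
      atTop (𝓝 0)

/-- `u(x) → c` as `d(x,O) → ∞` along `x ∈ X \ E`. -/
def TendstoOutside (O : X) (E : Set X) (u : X → ℝ) (c : ℝ) : Prop :=
  ∀ ε : ℝ, 0 < ε → ∃ N : ℕ, ∀ x : X, x ∉ E → (N : ℝ) < dist x O → |u x - c| < ε

/-- The `ρ`-restricted Hausdorff content of codimension `d`, where the infimum runs
over all finite or countable coverings of `E` by balls of positive radii at most `ρ`. -/
def hContent (μ : Measure X) (d : ℝ) (ρ : ℝ≥0∞) (E : Set X) : ℝ≥0∞ :=
  ⨅ (c : ℕ → X) (r : ℕ → ℝ) (J : Set ℕ)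
    (_ : (∀ j ∈ J, 0 < r j ∧ ENNReal.ofReal (r j) ≤ ρ) ∧
        E ⊆ ⋃ j ∈ J, ball (c j) (r j)),
    ∑' j : J, μ (ball (c (j : ℕ)) (r (j : ℕ))) / ENNReal.ofReal (r (j : ℕ) ^ d)

/-- The homogeneous fractional Sobolev quasinorm `‖u‖_{Ẇ^{s,p}_q}`. -/
def fracNorm (μ : Measure X) (s p q : ℝ) (u : X → ℝ) : ℝ≥0∞ :=
  (∫⁻ x, (∫⁻ y, ENNReal.ofReal |u x - u y| ^ q /
      (ENNReal.ofReal (dist x y ^ (s * q)) * μ (ball x (dist x y))) ∂μ) ^ (p / q) ∂μ) ^ (1 / p)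

/-- Membership in the homogeneous fractional Sobolev space `Ẇ^{s,p}_q(X)`. -/
def MemFrac (μ : Measure X) (s p q : ℝ) (u : X → ℝ) : Prop :=
  Measurable u ∧ fracNorm μ s p q u < ⊤

/-- The capacity `Cap_{W^{s,p}_q}(E)`; the infimum over the empty set is `⊤ = ∞`. -/
def fracCapacity (μ : Measure X) (s p q : ℝ) (E : Set X) : ℝ≥0∞ :=
  ⨅ (u : X → ℝ) (_ : MemFrac μ s p q u ∧ lpNormP μ p u Set.univ < ⊤ ∧
      ∃ U : Set X, IsOpen U ∧ E ⊆ U ∧ ∀ x ∈ U, 1 ≤ u x),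
    (lpNormP μ p u Set.univ ^ (1 / p) + fracNorm μ s p q u) ^ p

/-- `W^{s,p}_q`-quasicontinuity of `u`. -/
def FracQC (μ : Measure X) (s p q : ℝ) (u : X → ℝ) : Prop :=
  ∀ ε : ℝ, 0 < ε → ∃ E : Set X,
    fracCapacity μ s p q E < ENNReal.ofReal ε ∧ ContinuousOn u Eᶜ

end Paper

/-!
If `X \ E` were bounded, `E` would contain every annulus `A_r(O)` with `r` large, and
`cap_{s,p}(A_r, ΛA_r) ≥ μ(A_r) / diam(ΛA_r)^{sp}`. Reverse doubling gives
`μ(A_r) ≥ (1 - c_R) μ(B(O,κr))`, the iterated reverse doubling gives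
`μ(B(O,κr)) ≥ (κr)^σ μ(B(O,1)) / c_σ`, and `diam(ΛA_r)^{sp} ≤ (2Λ)^{sp} (κr)^σ`
because `sp ≤ σ`.
So these capacities are bounded below uniformly in `r`, and the tails of the series in the
thinness condition cannot tend to `0`.
-/

namespace Paper

theorem ofReal_rpow_div_mul_le {a b : ℝ≥0∞} {c R σ : ℝ} (hc : 0 < c) (hR : 0 < R)
    (h : a ≤ ENNReal.ofReal (c * (1 / R) ^ σ) * b) : ENNReal.ofReal (R ^ σ / c) * a ≤ b :=
  calc ENNReal.ofReal (R ^ σ / c) * a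
      ≤ ENNReal.ofReal (R ^ σ / c) * (ENNReal.ofReal (c * (1 / R) ^ σ) * b) := by gcongr
    _ = ENNReal.ofReal (R ^ σ / c * (c * (1 / R) ^ σ)) * b := by
      rw [← mul_assoc, ← ENNReal.ofReal_mul (by positivity)]
    _ = b := by
      rw [Real.div_rpow zero_le_one hR.le, Real.one_rpow]
      field_simp
      rw [ENNReal.ofReal_one, one_mul]

section Annuli

variable {X : Type*} [MetricSpace X]

theorem ann_subset_annL {κ Λ r : ℝ} (O : X) (hκ : 0 ≤ κ) (hΛ : 1 ≤ Λ) (hr : 0 ≤ r) :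
    ann κ O r ⊆ annL κ Λ O r := by
  rintro x ⟨hx_outer, hx_inner⟩
  refine ⟨ball_subset_ball ?_ hx_outer,
    fun hx => hx_inner (ball_subset_ball (div_le_self hr hΛ) hx)⟩
  nlinarith [mul_nonneg hκ hr]

theorem diam_annL_le (κ Λ : ℝ) (O : X) {r : ℝ} (h : 0 ≤ Λ * (κ * r)) :
    diam (annL κ Λ O r) ≤ 2 * (Λ * (κ * r)) :=
  (diam_mono sdiff_subset isBounded_ball).trans (diam_ball h)

variable [MeasurableSpace X]

theorem one_sub_mul_measure_ball_le_measure_ann {μ : Measure X} {c : ℝ≥0∞} {κ r : ℝ}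
    {O : X} (hfin : μ (ball O (κ * r)) ≠ ⊤) (hrev : μ (ball O r) ≤ c * μ (ball O (κ * r))) :
    (1 - c) * μ (ball O (κ * r)) ≤ μ (ann κ O r) := by
  have hcover : μ (ball O (κ * r)) ≤ μ (ball O r) + μ (ann κ O r) :=
    (measure_mono fun x hx => (em (x ∈ ball O r)).imp id fun h => ⟨hx, h⟩).trans
      (measure_union_le _ _)
  rw [ENNReal.sub_mul fun _ _ => hfin, one_mul, tsub_le_iff_left]
  exact hcover.trans (add_le_add_left hrev _)

end Annuli

section Capacity

variable {X : Type*} [MeasurableSpace X]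

theorem measure_le_lpNormP {μ : Measure X} {p : ℝ} (hp : 0 ≤ p) {v : X → ℝ}
    (hv : Measurable v) {E F : Set X} (hEF : E ⊆ F) (hv_one : ∀ x ∈ E, 1 ≤ v x) :
    μ E ≤ lpNormP μ p v F :=
  calc μ E = ∫⁻ _ in E, 1 ∂μ := (setLIntegral_one E).symm
    _ ≤ ∫⁻ x in E, ENNReal.ofReal |v x| ^ p ∂μ := by
      refine setLIntegral_mono (by fun_prop) fun x hx => ?_
      rw [← ENNReal.one_rpow p]
      exact ENNReal.rpow_le_rpow
        (ENNReal.one_le_ofReal.2 ((hv_one x hx).trans (le_abs_self _))) hp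
    _ ≤ lpNormP μ p v F := lintegral_mono_set hEF

variable [MetricSpace X]

theorem measure_div_le_relCap {μ : Measure X} {s p : ℝ} (hp : 0 ≤ p) {E F : Set X}
    (hEF : E ⊆ F) : μ E / ENNReal.ofReal (diam F ^ (s * p)) ≤ relCap μ s p E F :=
  le_iInf₂ fun _ hv =>
    (ENNReal.div_le_div_right (measure_le_lpNormP hp hv.1.1 hEF hv.2.2) _).trans le_self_add

theorem le_relCap_ann {μ : Measure X} {O : X} {cR κ Λ σ cσ s p r : ℝ} (hκ : 1 ≤ κ)
    (hΛ : 1 ≤ Λ) (hR : 1 < κ * r) (hs : 0 ≤ s) (hp : 0 ≤ p) (hsp : s * p ≤ σ)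
    (hcσ : 0 < cσ) (hfin : μ (ball O (κ * r)) ≠ ⊤)
    (hrev : μ (ball O r) ≤ ENNReal.ofReal cR * μ (ball O (κ * r)))
    (hiter : μ (ball O 1) ≤ ENNReal.ofReal (cσ * (1 / (κ * r)) ^ σ) * μ (ball O (κ * r))) :
    (1 - ENNReal.ofReal cR) * ENNReal.ofReal (1 / (cσ * (2 * Λ) ^ (s * p))) * μ (ball O 1) ≤
      relCap μ s p (ann κ O r) (annL κ Λ O r) := by
  set R := κ * r
  have hR0 : 0 < R := one_pos.trans hR
  have hr : 0 ≤ r := by nlinarith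
  have hΛ0 : 0 < 2 * Λ := by linarith
  have hsp0 : 0 ≤ s * p := mul_nonneg hs hp
  set D := ENNReal.ofReal ((2 * Λ) ^ (s * p) * R ^ σ)
  have hD0 : D ≠ 0 := by positivity
  have hdiam : ENNReal.ofReal (diam (annL κ Λ O r) ^ (s * p)) ≤ D := by
    refine ENNReal.ofReal_le_ofReal ?_
    calc diam (annL κ Λ O r) ^ (s * p) ≤ (2 * Λ * R) ^ (s * p) := by
          refine Real.rpow_le_rpow diam_nonneg ?_ hsp0
          simpa only [mul_assoc] using diam_annL_le κ Λ O (by positivity)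
      _ = (2 * Λ) ^ (s * p) * R ^ (s * p) := Real.mul_rpow hΛ0.le hR0.le
      _ ≤ (2 * Λ) ^ (s * p) * R ^ σ := by
          gcongr
          exact hR.le
  have hCD : (1 - ENNReal.ofReal cR) * ENNReal.ofReal (1 / (cσ * (2 * Λ) ^ (s * p))) *
      μ (ball O 1) * D ≤ μ (ann κ O r) :=
    calc _ = (1 - ENNReal.ofReal cR) * (ENNReal.ofReal (R ^ σ / cσ) * μ (ball O 1)) := by
          have hconst :
              1 / (cσ * (2 * Λ) ^ (s * p)) * ((2 * Λ) ^ (s * p) * R ^ σ) = R ^ σ / cσ := by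
            field_simp
          rw [← hconst, ENNReal.ofReal_mul (by positivity)]
          ring
      _ ≤ (1 - ENNReal.ofReal cR) * μ (ball O R) := by
          gcongr
          exact ofReal_rpow_div_mul_le hcσ hR0 hiter
      _ ≤ μ (ann κ O r) := one_sub_mul_measure_ball_le_measure_ann hfin hrev
  calc _ ≤ μ (ann κ O r) / D :=
        (ENNReal.le_div_iff_mul_le (.inl hD0) (.inl ENNReal.ofReal_ne_top)).2 hCD
    _ ≤ μ (ann κ O r) / ENNReal.ofReal (diam (annL κ Λ O r) ^ (s * p)) :=
      ENNReal.div_le_div_left hdiam _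
    _ ≤ relCap μ s p (ann κ O r) (annL κ Λ O r) :=
      measure_div_le_relCap hp (ann_subset_annL O (by linarith) hΛ hr)

end Capacity

variable {X : Type*} [MetricSpace X] [MeasurableSpace X]

theorem ThinAtInfinity.eventually_relCap_lt {μ : Measure X} {s p κ Λ : ℝ} {O : X} {E : Set X}
    (hE : ThinAtInfinity μ s p κ O E) (hΛ : 1 < Λ) {C : ℝ≥0∞} (hC : 0 < C) :
    ∀ᶠ m : ℕ in atTop, relCap μ s p (E ∩ ann κ O (κ ^ m)) (annL κ Λ O (κ ^ m)) < C :=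
  ((hE Λ hΛ).eventually_lt_const hC).mono fun m hm =>
    (le_of_eq_of_le (by rw [add_zero]) (ENNReal.le_tsum 0)).trans_lt hm

theorem statement8_general
    (μ : Measure X)
    (hball : ∀ (x : X) (r : ℝ), 0 < r → 0 < μ (ball x r) ∧ μ (ball x r) < ⊤)
    (cR κ : ℝ) (hcR1 : cR < 1) (hκ : 1 < κ)
    (hrev : ∀ (x : X) (r : ℝ), 0 < r → μ (ball x r) ≤ ENNReal.ofReal cR * μ (ball x (κ * r)))
    (σ cσ : ℝ) (hcσ : 0 < cσ)
    (hiter : ∀ (x : X) (r r₀ : ℝ), 0 < r → r < r₀ →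
      μ (ball x r) ≤ ENNReal.ofReal (cσ * (r / r₀) ^ σ) * μ (ball x r₀))
    (s p : ℝ) (hs0 : 0 < s) (hp : 0 < p) (hsp : s * p ≤ σ)
    (O : X) (E : Set X) (hE : ThinAtInfinity μ s p κ O E) :
    ∀ N : ℕ, ∃ x : X, x ∉ E ∧ (N : ℝ) < dist x O := by
  intro N
  by_contra! hbdd
  set C := (1 - ENNReal.ofReal cR) * ENNReal.ofReal (1 / (cσ * (2 * 2) ^ (s * p))) * μ (ball O 1)
  have hC : 0 < C := by
    have hgap : 0 < 1 - ENNReal.ofReal cR := tsub_pos_of_lt (ENNReal.ofReal_lt_one.2 hcR1)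
    have hB₁ : 0 < μ (ball O 1) := (hball O 1 one_pos).1
    positivity
  obtain ⟨m, hm_small, hm_far⟩ := ((hE.eventually_relCap_lt one_lt_two hC).and
    ((tendsto_pow_atTop_atTop_of_one_lt hκ).eventually_gt_atTop (N : ℝ))).exists
  have hann : ann κ O (κ ^ m) ⊆ E := fun x hx => by
    by_contra hxE
    exact (hbdd x hxE).not_gt (hm_far.trans_le (not_lt.1 hx.2))
  have hR : 1 < κ * κ ^ m := one_lt_mul_of_lt_of_le hκ (one_le_pow₀ hκ.le)
  rw [inter_eq_right.2 hann] at hm_small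
  exact hm_small.not_ge (le_relCap_ann hκ.le one_le_two hR hs0.le hp.le hsp hcσ
    (hball O _ (one_pos.trans hR)).2.ne (hrev O _ (by positivity)) (hiter O 1 _ one_pos hR))

/-- Remark 7.4: if `sp ≤ σ` and `E(O)` is `(s,p)`-thin at infinity,
then `X \ E(O)` is unbounded. -/
theorem statement8 [BorelSpace X]
    (μ : Measure X) (hcomp : μ.IsComplete)
    (hball : ∀ (x : X) (r : ℝ), 0 < r → 0 < μ (ball x r) ∧ μ (ball x r) < ⊤)
    (hdiam : EMetric.diam (Set.univ : Set X) = ⊤)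
    (cμ : ℝ) (hcμ : 1 ≤ cμ)
    (hdoub : ∀ (x : X) (r : ℝ), 0 < r → μ (ball x (2 * r)) ≤ ENNReal.ofReal cμ * μ (ball x r))
    (cR κ : ℝ) (hcR0 : 0 < cR) (hcR1 : cR < 1) (hκ : 1 < κ)
    (hrev : ∀ (x : X) (r : ℝ), 0 < r → μ (ball x r) ≤ ENNReal.ofReal cR * μ (ball x (κ * r)))
    (σ cσ : ℝ) (hσ : 0 < σ) (hcσ : 0 < cσ)
    (hiter : ∀ (x : X) (r r₀ : ℝ), 0 < r → r < r₀ →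
      μ (ball x r) ≤ ENNReal.ofReal (cσ * (r / r₀) ^ σ) * μ (ball x r₀))
    (s p : ℝ) (hs0 : 0 < s) (hs1 : s ≤ 1) (hp : 0 < p) (hsp : s * p ≤ σ)
    (O : X) (E : Set X) (hE : ThinAtInfinity μ s p κ O E) :
    ∀ N : ℕ, ∃ x : X, x ∉ E ∧ (N : ℝ) < dist x O :=
  statement8_general μ hball cR κ hcR1 hκ hrev σ cσ hcσ hiter s p hs0 hp hsp O E hE

end Paper
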